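/- arXiv:2412.20629 — 2 statements merged into one kernel-verified Lean document; each statement's English description precedes it below -/
import Mathlib

section
/- Suppose that for Lebesgue-almost every t in the set {t ∈ [0,1] : Γ(t) < min{t, φ(t)}}, both Γ and φ are differentiable at t and Γ'(t) ∈ {0, 1 + φ'(t)}. Then the φ-splice C₂ ▵_φ C₁ is a copula. -/
open Set MeasureTheory

/-- `Γ̂(t) = t - Γ(t)`. -/
def Ghat (Γ : ℝ → ℝ) : ℝ → ℝ := fun t => t - Γ t

/-- `Γ̃(t) = φ(t) - Γ(t)`. -/
def Gtil (φ Γ : ℝ → ℝ) : ℝ → ℝ := fun t => φ t - Γ t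

/-- The (signed) total variation `V_a^b(f)` of `f` on `[a, b] ⊆ [0, 1]`, with
the conventions `V_b^a(f) = -V_a^b(f)` and `V_a^a(f) = 0`. -/
noncomputable def sV (f : ℝ → ℝ) (a b : ℝ) : ℝ := variationOnFromTo f (Set.Icc 0 1) a b

/-- `f₁(x, y) = x - (1/2) (V_{φ⁻¹(y)}^x(Γ̂) + Γ̂(x) + Γ̂(φ⁻¹(y)))`, where `ψ = φ⁻¹`. -/
noncomputable def f1 (ψ Γ : ℝ → ℝ) (x y : ℝ) : ℝ :=
  x - (1/2) * (sV (Ghat Γ) (ψ y) x + Ghat Γ x + Ghat Γ (ψ y))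

/-- `f₂(x, y) = y - (1/2) (V_x^{φ⁻¹(y)}(Γ̃) + Γ̃(x) + Γ̃(φ⁻¹(y)))`, where `ψ = φ⁻¹`. -/
noncomputable def f2 (φ ψ Γ : ℝ → ℝ) (x y : ℝ) : ℝ :=
  y - (1/2) * (sV (Gtil φ Γ) x (ψ y) + Gtil φ Γ x + Gtil φ Γ (ψ y))

/-- `C₁(x, y) = min {x, y, f₁(x, y)}`. -/
noncomputable def C1 (ψ Γ : ℝ → ℝ) (x y : ℝ) : ℝ := min x (min y (f1 ψ Γ x y))

/-- `C₂(x, y) = min {x, y, f₂(x, y)}`. -/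
noncomputable def C2 (φ ψ Γ : ℝ → ℝ) (x y : ℝ) : ℝ := min x (min y (f2 φ ψ Γ x y))

/-- The φ-splice `C₂ ▵_φ C₁`: equal to `C₁` when `y ≤ φ(x)`, to `C₂` when `y ≥ φ(x)`. -/
noncomputable def splice (φ ψ Γ : ℝ → ℝ) (x y : ℝ) : ℝ :=
  if y ≤ φ x then C1 ψ Γ x y else C2 φ ψ Γ x y

/-- A copula on `[0,1]²`: boundary conditions and 2-increasingness. -/
def IsCopula (C : ℝ → ℝ → ℝ) : Prop :=
  (∀ x ∈ Set.Icc (0:ℝ) 1, ∀ y ∈ Set.Icc (0:ℝ) 1, C x y ∈ Set.Icc (0:ℝ) 1) ∧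
  (∀ x ∈ Set.Icc (0:ℝ) 1, C x 0 = 0 ∧ C 0 x = 0 ∧ C x 1 = x ∧ C 1 x = x) ∧
  (∀ x₁ x₂ y₁ y₂ : ℝ, x₁ ∈ Set.Icc (0:ℝ) 1 → x₂ ∈ Set.Icc (0:ℝ) 1 →
    y₁ ∈ Set.Icc (0:ℝ) 1 → y₂ ∈ Set.Icc (0:ℝ) 1 → x₁ ≤ x₂ → y₁ ≤ y₂ →
    0 ≤ C x₂ y₂ - C x₂ y₁ - C x₁ y₂ + C x₁ y₁)

/-- The greatest quasi-copula `A_Γ` with curvilinear section `Γ` (`ψ = φ⁻¹`). -/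
noncomputable def AG (φ ψ Γ : ℝ → ℝ) (x y : ℝ) : ℝ :=
  if y ≤ φ x then min y (x - sSup (Ghat Γ '' Set.Icc (ψ y) x))
  else min x (y - sSup (Gtil φ Γ '' Set.Icc x (ψ y)))

/-!
On each side of the curve `y = φ x` the splice is `min {x, y, f}`, where `f` is the sum of a
function of `x` and a function of `y` whose increments lie between `0` and those of `x`, resp.
`y`; this makes it 2-increasing there. A rectangle crossing the curve is cut into pieces lying on
one side and a square `[s, t] × [φ s, φ t]` with two corners on the curve, whose volume is
`Γ s + Γ t - C₁(t, φ s) - C₂(s, φ t)`. If it were negative, `Γ` would stay below `min {t, φ t}` on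
`[s, t]`, and there `V_s^t(Γ̂) + V_s^t(Γ̃) ≥ (t - s) + (φ t - φ s)` gives a contradiction: the
monotone function `(V(Γ̂) + Γ̂ + V(Γ̃) - Γ̃) / 2` has derivative at least `1` almost everywhere,
because `Γ' = 0` or `Γ' = 1 + φ'`.
-/

section Variation

variable {α : Type*} [LinearOrder α]

theorem eVariationOn_le_eVariationOn_of_edist_le {E F : Type*} [PseudoEMetricSpace E]
    [PseudoEMetricSpace F] {f : α → E} {g : α → F} {s : Set α}
    (h : ∀ x ∈ s, ∀ y ∈ s, edist (f x) (f y) ≤ edist (g x) (g y)) :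
    eVariationOn f s ≤ eVariationOn g s :=
  iSup_mono fun p => Finset.sum_le_sum fun _ _ => h _ (p.2.2.2 _) _ (p.2.2.2 _)

variable {f g : α → ℝ} {s : Set α} {a b : α}

theorem monotoneOn_of_abs_sub_le (h : ∀ x ∈ s, ∀ y ∈ s, x ≤ y → |f y - f x| ≤ g y - g x) :
    MonotoneOn g s :=
  fun x hx y hy hxy => sub_nonneg.1 ((abs_nonneg _).trans (h x hx y hy hxy))

theorem eVariationOn_le_of_abs_sub_le
    (h : ∀ x ∈ s, ∀ y ∈ s, x ≤ y → |f y - f x| ≤ g y - g x) :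
    eVariationOn f s ≤ eVariationOn g s := by
  refine eVariationOn_le_eVariationOn_of_edist_le fun x hx y hy => ?_
  rw [edist_dist, edist_dist, Real.dist_eq, Real.dist_eq]
  refine ENNReal.ofReal_le_ofReal ?_
  rcases le_total x y with hxy | hxy
  · rw [abs_sub_comm, abs_sub_comm (g x)]
    exact (h x hx y hy hxy).trans (le_abs_self _)
  · exact (h y hy x hx hxy).trans (le_abs_self _)

theorem LocallyBoundedVariationOn.of_abs_sub_le
    (h : ∀ x ∈ s, ∀ y ∈ s, x ≤ y → |f y - f x| ≤ g y - g x) :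
    LocallyBoundedVariationOn f s := fun a b ha hb =>
  ne_top_of_le_ne_top ((monotoneOn_of_abs_sub_le h).locallyBoundedVariationOn a b ha hb)
    (eVariationOn_le_of_abs_sub_le fun x hx y hy => h x hx.1 y hy.1)

theorem variationOnFromTo_le_sub_of_abs_sub_le
    (h : ∀ x ∈ s, ∀ y ∈ s, x ≤ y → |f y - f x| ≤ g y - g x) (ha : a ∈ s) (hb : b ∈ s)
    (hab : a ≤ b) : variationOnFromTo f s a b ≤ g b - g a := by
  have hg := monotoneOn_of_abs_sub_le h
  rw [variationOnFromTo.eq_of_le _ _ hab, ← ENNReal.toReal_ofReal (sub_nonneg.2 (hg ha hb hab)),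
    ← hg.eVariationOn_eq ha hb]
  exact ENNReal.toReal_mono (hg.locallyBoundedVariationOn a b ha hb)
    (eVariationOn_le_of_abs_sub_le fun x hx y hy => h x hx.1 y hy.1)

namespace LocallyBoundedVariationOn

variable (hf : LocallyBoundedVariationOn f s)
include hf

theorem abs_sub_le_variationOnFromTo (ha : a ∈ s) (hb : b ∈ s) (hab : a ≤ b) :
    |f b - f a| ≤ variationOnFromTo f s a b := by
  simpa [variationOnFromTo.self] using variationOnFromTo.abs_sub_le_sub_of_le hf ha ha hb hab

theorem pos_of_variationOnFromTo_lt (ha : a ∈ s) (hb : b ∈ s)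
    (hlt : variationOnFromTo f s a b < f a + f b) {u : α} (hu : u ∈ s) (hau : a ≤ u)
    (hub : u ≤ b) : 0 < f u := by
  have hadd := variationOnFromTo.add hf ha hu hb
  have h₁ := abs_le.1 (hf.abs_sub_le_variationOnFromTo ha hu hau)
  have h₂ := abs_le.1 (hf.abs_sub_le_variationOnFromTo hu hb hub)
  linarith [h₁.1, h₂.2]

end LocallyBoundedVariationOn

end Variation

theorem le_deriv_of_monotoneOn_sub {f g : ℝ → ℝ} {s : Set ℝ} {x g' : ℝ} (hs : IsOpen s)
    (hx : x ∈ s) (hfg : MonotoneOn (f - g) s) (hf : DifferentiableAt ℝ f x)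
    (hg : HasDerivAt g g' x) : g' ≤ deriv f x := by
  have := hfg.derivWithin_nonneg (x := x)
  rw [derivWithin_of_isOpen hs hx, deriv_sub hf hg.differentiableAt, hg.deriv] at this
  linarith

theorem MonotoneOn.mul_sub_le_sub_of_le_deriv {f : ℝ → ℝ} {a b c : ℝ} (hab : a ≤ b)
    (hf : MonotoneOn f (Icc a b)) (h : ∀ᵐ x, x ∈ Ioo a b → c ≤ deriv f x) :
    c * (b - a) ≤ f b - f a := by
  rw [← uIcc_of_le hab] at hf
  have hint := hf.intervalIntegral_deriv_mem_uIcc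
  rw [uIcc_of_le (sub_nonneg.2 (hf left_mem_uIcc right_mem_uIcc hab))] at hint
  calc c * (b - a) = ∫ _ in a..b, c := by simp [mul_comm]
    _ ≤ ∫ x in a..b, deriv f x := by
      refine intervalIntegral.integral_mono_ae_restrict hab intervalIntegrable_const
        hf.intervalIntegrable_deriv ?_
      rw [← Measure.restrict_congr_set Ioo_ae_eq_Icc]
      exact (ae_restrict_iff' measurableSet_Ioo).2 h
    _ ≤ f b - f a := hint.2

def rectVolume (C : ℝ → ℝ → ℝ) (x₁ x₂ y₁ y₂ : ℝ) : ℝ :=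
  C x₂ y₂ - C x₂ y₁ - C x₁ y₂ + C x₁ y₁

theorem rectVolume_add_rectVolume (C : ℝ → ℝ → ℝ) (x₁ x₂ x₃ y₁ y₂ : ℝ) :
    rectVolume C x₁ x₂ y₁ y₂ + rectVolume C x₂ x₃ y₁ y₂ = rectVolume C x₁ x₃ y₁ y₂ := by
  unfold rectVolume; ring

theorem rectVolume_min_min_nonneg {m : ℝ → ℝ → ℝ} {x₁ x₂ y₁ y₂ : ℝ} (hx : x₁ ≤ x₂)
    (hy : y₁ ≤ y₂) (hm : rectVolume m x₁ x₂ y₁ y₂ = 0)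
    (hmx : 0 ≤ m x₂ y₁ - m x₁ y₁) (hmx' : m x₂ y₁ - m x₁ y₁ ≤ x₂ - x₁)
    (hmy : 0 ≤ m x₁ y₂ - m x₁ y₁) (hmy' : m x₁ y₂ - m x₁ y₁ ≤ y₂ - y₁) :
    0 ≤ rectVolume (fun x y => min x (min y (m x y))) x₁ x₂ y₁ y₂ := by
  simp only [rectVolume, min_def] at *
  split_ifs <;> linarith

theorem splice_of_le {φ ψ Γ : ℝ → ℝ} {x y : ℝ} (hyx : y ≤ φ x) :
    splice φ ψ Γ x y = C1 ψ Γ x y :=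
  if_pos hyx

local notation "𝕀" => Icc (0 : ℝ) 1

/-- The slopes `0` and `1 + φ'` are the extreme ones allowed by the increment bounds on `Γ`. -/
def HasExtremalSlopes (φ Γ : ℝ → ℝ) : Prop :=
  ∀ᵐ t ∂(volume : Measure ℝ), (t ∈ 𝕀 ∧ Γ t < min t (φ t)) →
    ∃ dφ dΓ : ℝ, HasDerivAt φ dφ t ∧ HasDerivAt Γ dΓ t ∧ (dΓ = 0 ∨ dΓ = 1 + dφ)

theorem sub_add_sub_le_sV_add_sV {φ Γ : ℝ → ℝ} (hderiv : HasExtremalSlopes φ Γ)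
    (hGhat : LocallyBoundedVariationOn (Ghat Γ) 𝕀)
    (hGtil : LocallyBoundedVariationOn (Gtil φ Γ) 𝕀) {s t : ℝ} (hs : s ∈ 𝕀) (ht : t ∈ 𝕀)
    (hst : s ≤ t) (hlt : ∀ u ∈ Icc s t, Γ u < min u (φ u)) :
    (t - s) + (φ t - φ s) ≤ sV (Ghat Γ) s t + sV (Gtil φ Γ) s t := by
  -- As `m - Γ̂` and `m + Γ̃` are monotone, `m' ≥ Γ̂' = 1` where `Γ' = 0` and `m' ≥ -Γ̃' = 1`
  -- where `Γ' = 1 + φ'`.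
  set m : ℝ → ℝ := fun u => (sV (Ghat Γ) s u + Ghat Γ u + (sV (Gtil φ Γ) s u - Gtil φ Γ u)) / 2
  have hsub : Icc s t ⊆ 𝕀 := Icc_subset_Icc hs.1 ht.2
  have hhat_add := (variationOnFromTo.add_self_monotoneOn hGhat hs).mono hsub
  have hhat_sub := (variationOnFromTo.sub_self_monotoneOn hGhat hs).mono hsub
  have htil_add := (variationOnFromTo.add_self_monotoneOn hGtil hs).mono hsub
  have htil_sub := (variationOnFromTo.sub_self_monotoneOn hGtil hs).mono hsub
  have hm : MonotoneOn m (Icc s t) := fun x hx y hy hxy => by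
    have h₁ := hhat_add hx hy hxy; have h₂ := htil_sub hx hy hxy
    simp only [m, sV, Pi.add_apply, Pi.sub_apply] at h₁ h₂ ⊢; linarith
  have hm_hat : MonotoneOn (m - Ghat Γ) (Icc s t) := fun x hx y hy hxy => by
    have h₁ := hhat_sub hx hy hxy; have h₂ := htil_sub hx hy hxy
    simp only [m, sV, Pi.sub_apply] at h₁ h₂ ⊢; linarith
  have hm_til : MonotoneOn (m - fun u => -Gtil φ Γ u) (Icc s t) := fun x hx y hy hxy => by
    have h₁ := hhat_add hx hy hxy; have h₂ := htil_add hx hy hxy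
    simp only [m, sV, Pi.add_apply, Pi.sub_apply] at h₁ h₂ ⊢; linarith
  have hderiv_m : ∀ᵐ x, x ∈ Ioo s t → 1 ≤ deriv m x := by
    filter_upwards [hderiv, (hm.mono Ioo_subset_Icc_self).ae_differentiableWithinAt_of_mem]
      with x hx hmx hxst
    have hxst' := Ioo_subset_Icc_self hxst
    have hmx := (hmx hxst).differentiableAt (isOpen_Ioo.mem_nhds hxst)
    obtain ⟨dφ, dΓ, hφ', hΓ', hdΓ | hdΓ⟩ := hx ⟨hsub hxst', hlt x hxst'⟩
    · have hGhat' : HasDerivAt (fun u => u - Γ u) (1 - dΓ) x := (hasDerivAt_id' x).sub hΓ'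
      rw [hdΓ, sub_zero] at hGhat'
      exact le_deriv_of_monotoneOn_sub isOpen_Ioo hxst (hm_hat.mono Ioo_subset_Icc_self) hmx
        hGhat'
    · have hGtil' : HasDerivAt (fun u => -(φ u - Γ u)) (-(dφ - dΓ)) x := (hφ'.sub hΓ').neg
      rw [hdΓ, sub_add_cancel_right, neg_neg] at hGtil'
      exact le_deriv_of_monotoneOn_sub isOpen_Ioo hxst (hm_til.mono Ioo_subset_Icc_self) hmx
        hGtil'
  have := hm.mul_sub_le_sub_of_le_deriv hst hderiv_m
  simp only [m, sV, variationOnFromTo.self, Ghat, Gtil] at this ⊢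
  linarith

structure IsCurvilinearSection (φ ψ Γ : ℝ → ℝ) : Prop where
  strictMonoOn : StrictMonoOn φ 𝕀
  map_zero : φ 0 = 0
  map_one : φ 1 = 1
  bounds : ∀ t ∈ 𝕀, max 0 (t + φ t - 1) ≤ Γ t ∧ Γ t ≤ min t (φ t)
  increment : ∀ t₁ t₂ : ℝ, t₁ ∈ 𝕀 → t₂ ∈ 𝕀 → t₁ ≤ t₂ →
    0 ≤ Γ t₂ - Γ t₁ ∧ Γ t₂ - Γ t₁ ≤ (t₂ - t₁) + (φ t₂ - φ t₁)
  inv_mem : ∀ y ∈ 𝕀, ψ y ∈ 𝕀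
  inv_apply : ∀ t ∈ 𝕀, ψ (φ t) = t
  apply_inv : ∀ y ∈ 𝕀, φ (ψ y) = y

namespace IsCurvilinearSection

variable {φ ψ Γ : ℝ → ℝ} {x y s t x₁ x₂ y₁ y₂ : ℝ}

theorem monotoneOn (h : IsCurvilinearSection φ ψ Γ) : MonotoneOn φ 𝕀 :=
  h.strictMonoOn.monotoneOn

theorem apply_mem (h : IsCurvilinearSection φ ψ Γ) (hx : x ∈ 𝕀) : φ x ∈ 𝕀 :=
  ⟨h.map_zero ▸ h.monotoneOn ⟨le_rfl, zero_le_one⟩ hx hx.1,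
    h.map_one ▸ h.monotoneOn hx ⟨zero_le_one, le_rfl⟩ hx.2⟩

theorem le_apply_iff_inv_le (h : IsCurvilinearSection φ ψ Γ) (hx : x ∈ 𝕀) (hy : y ∈ 𝕀) :
    y ≤ φ x ↔ ψ y ≤ x := by
  conv_lhs => rw [← h.apply_inv y hy]
  exact h.strictMonoOn.le_iff_le (h.inv_mem y hy) hx

theorem apply_le_iff_le_inv (h : IsCurvilinearSection φ ψ Γ) (hx : x ∈ 𝕀) (hy : y ∈ 𝕀) :
    φ x ≤ y ↔ x ≤ ψ y := by
  conv_lhs => rw [← h.apply_inv y hy]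
  exact h.strictMonoOn.le_iff_le hx (h.inv_mem y hy)

theorem inv_monotoneOn (h : IsCurvilinearSection φ ψ Γ) : MonotoneOn ψ 𝕀 :=
  fun y hy y' hy' hyy' =>
    (h.le_apply_iff_inv_le (h.inv_mem y' hy') hy).1 (by rwa [h.apply_inv y' hy'])

theorem inv_zero (h : IsCurvilinearSection φ ψ Γ) : ψ 0 = 0 := by
  simpa [h.map_zero] using h.inv_apply 0 ⟨le_rfl, zero_le_one⟩

theorem inv_one (h : IsCurvilinearSection φ ψ Γ) : ψ 1 = 1 := by
  simpa [h.map_one] using h.inv_apply 1 ⟨zero_le_one, le_rfl⟩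

theorem section_nonneg (h : IsCurvilinearSection φ ψ Γ) (hx : x ∈ 𝕀) : 0 ≤ Γ x :=
  (le_max_left _ _).trans (h.bounds x hx).1

theorem section_le_self (h : IsCurvilinearSection φ ψ Γ) (hx : x ∈ 𝕀) : Γ x ≤ x :=
  (h.bounds x hx).2.trans (min_le_left _ _)

theorem section_le_apply (h : IsCurvilinearSection φ ψ Γ) (hx : x ∈ 𝕀) : Γ x ≤ φ x :=
  (h.bounds x hx).2.trans (min_le_right _ _)

theorem section_zero (h : IsCurvilinearSection φ ψ Γ) : Γ 0 = 0 :=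
  le_antisymm (h.section_le_self ⟨le_rfl, zero_le_one⟩) (h.section_nonneg ⟨le_rfl, zero_le_one⟩)

theorem section_one (h : IsCurvilinearSection φ ψ Γ) : Γ 1 = 1 := by
  have := (le_max_right _ _).trans (h.bounds 1 ⟨zero_le_one, le_rfl⟩).1
  exact le_antisymm (h.section_le_self ⟨zero_le_one, le_rfl⟩) (by linarith [h.map_one])

theorem abs_sub_Ghat_le (h : IsCurvilinearSection φ ψ Γ) :
    ∀ x ∈ 𝕀, ∀ y ∈ 𝕀, x ≤ y → |Ghat Γ y - Ghat Γ x| ≤ (y + Γ y) - (x + Γ x) := by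
  intro x hx y hy hxy
  have := h.increment x y hx hy hxy
  rw [abs_le]; constructor <;> simp only [Ghat] <;> linarith

theorem abs_sub_Ghat_le' (h : IsCurvilinearSection φ ψ Γ) : ∀ x ∈ 𝕀, ∀ y ∈ 𝕀, x ≤ y →
    |Ghat Γ y - Ghat Γ x| ≤ (2 * φ y + y - Γ y) - (2 * φ x + x - Γ x) := by
  intro x hx y hy hxy
  have := h.increment x y hx hy hxy
  have := h.monotoneOn hx hy hxy
  rw [abs_le]; constructor <;> simp only [Ghat] <;> linarith

theorem abs_sub_Gtil_le (h : IsCurvilinearSection φ ψ Γ) :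
    ∀ x ∈ 𝕀, ∀ y ∈ 𝕀, x ≤ y → |Gtil φ Γ y - Gtil φ Γ x| ≤ (φ y + Γ y) - (φ x + Γ x) := by
  intro x hx y hy hxy
  have := h.increment x y hx hy hxy
  have := h.monotoneOn hx hy hxy
  rw [abs_le]; constructor <;> simp only [Gtil] <;> linarith

theorem abs_sub_Gtil_le' (h : IsCurvilinearSection φ ψ Γ) : ∀ x ∈ 𝕀, ∀ y ∈ 𝕀, x ≤ y →
    |Gtil φ Γ y - Gtil φ Γ x| ≤ (2 * y + φ y - Γ y) - (2 * x + φ x - Γ x) := by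
  intro x hx y hy hxy
  have := h.increment x y hx hy hxy
  have := h.monotoneOn hx hy hxy
  rw [abs_le]; constructor <;> simp only [Gtil] <;> linarith

theorem locallyBoundedVariationOn_Ghat (h : IsCurvilinearSection φ ψ Γ) :
    LocallyBoundedVariationOn (Ghat Γ) 𝕀 :=
  .of_abs_sub_le h.abs_sub_Ghat_le

theorem locallyBoundedVariationOn_Gtil (h : IsCurvilinearSection φ ψ Γ) :
    LocallyBoundedVariationOn (Gtil φ Γ) 𝕀 :=
  .of_abs_sub_le h.abs_sub_Gtil_le

theorem f1_sub_f1 (h : IsCurvilinearSection φ ψ Γ) (hx₁ : x₁ ∈ 𝕀) (hx₂ : x₂ ∈ 𝕀)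
    (hy₁ : y₁ ∈ 𝕀) (hy₂ : y₂ ∈ 𝕀) :
    f1 ψ Γ x₂ y₂ - f1 ψ Γ x₁ y₁ =
      (x₂ - x₁) - (sV (Ghat Γ) x₁ x₂ + (Ghat Γ x₂ - Ghat Γ x₁)) / 2
        + (sV (Ghat Γ) (ψ y₁) (ψ y₂) - (Ghat Γ (ψ y₂) - Ghat Γ (ψ y₁))) / 2 := by
  have hV := h.locallyBoundedVariationOn_Ghat
  have ha₁ := h.inv_mem y₁ hy₁
  have ha₂ := h.inv_mem y₂ hy₂
  have e₁ := variationOnFromTo.add hV ha₂ ha₁ hx₁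
  have e₂ := variationOnFromTo.add hV ha₂ hx₁ hx₂
  have e₃ := variationOnFromTo.add hV ha₁ ha₂ ha₁
  simp only [f1, sV, variationOnFromTo.self] at *
  linarith

theorem f2_sub_f2 (h : IsCurvilinearSection φ ψ Γ) (hx₁ : x₁ ∈ 𝕀) (hx₂ : x₂ ∈ 𝕀)
    (hy₁ : y₁ ∈ 𝕀) (hy₂ : y₂ ∈ 𝕀) :
    f2 φ ψ Γ x₂ y₂ - f2 φ ψ Γ x₁ y₁ =
      (y₂ - y₁) - (sV (Gtil φ Γ) (ψ y₁) (ψ y₂) + (Gtil φ Γ (ψ y₂) - Gtil φ Γ (ψ y₁))) / 2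
        + (sV (Gtil φ Γ) x₁ x₂ - (Gtil φ Γ x₂ - Gtil φ Γ x₁)) / 2 := by
  have hV := h.locallyBoundedVariationOn_Gtil
  have ha₁ := h.inv_mem y₁ hy₁
  have ha₂ := h.inv_mem y₂ hy₂
  have e₁ := variationOnFromTo.add hV hx₂ hx₁ ha₁
  have e₂ := variationOnFromTo.add hV hx₂ ha₁ ha₂
  have e₃ := variationOnFromTo.add hV hx₁ hx₂ hx₁
  simp only [f2, sV, variationOnFromTo.self] at *
  linarith

theorem rectVolume_C1_nonneg (h : IsCurvilinearSection φ ψ Γ) (hx₁ : x₁ ∈ 𝕀) (hx₂ : x₂ ∈ 𝕀)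
    (hy₁ : y₁ ∈ 𝕀) (hy₂ : y₂ ∈ 𝕀) (hx : x₁ ≤ x₂) (hy : y₁ ≤ y₂) :
    0 ≤ rectVolume (C1 ψ Γ) x₁ x₂ y₁ y₂ := by
  have hV := h.locallyBoundedVariationOn_Ghat
  have ha₁ := h.inv_mem y₁ hy₁
  have ha₂ := h.inv_mem y₂ hy₂
  have ha := h.inv_monotoneOn hy₁ hy₂ hy
  have hx_abs := abs_le.1 (hV.abs_sub_le_variationOnFromTo hx₁ hx₂ hx)
  have ha_abs := abs_le.1 (hV.abs_sub_le_variationOnFromTo ha₁ ha₂ ha)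
  have hx_le := variationOnFromTo_le_sub_of_abs_sub_le h.abs_sub_Ghat_le hx₁ hx₂ hx
  have ha_le := variationOnFromTo_le_sub_of_abs_sub_le h.abs_sub_Ghat_le' ha₁ ha₂ ha
  have e₁ := h.f1_sub_f1 hx₁ hx₂ hy₁ hy₁
  have e₂ := h.f1_sub_f1 hx₁ hx₁ hy₁ hy₂
  have e₃ := h.f1_sub_f1 hx₁ hx₂ hy₁ hy₂
  have hφ₁ := h.apply_inv y₁ hy₁
  have hφ₂ := h.apply_inv y₂ hy₂
  simp only [sV, variationOnFromTo.self, Ghat] at *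
  exact rectVolume_min_min_nonneg hx hy (by unfold rectVolume; linarith) (by linarith)
    (by linarith) (by linarith) (by linarith)

theorem rectVolume_C2_nonneg (h : IsCurvilinearSection φ ψ Γ) (hx₁ : x₁ ∈ 𝕀) (hx₂ : x₂ ∈ 𝕀)
    (hy₁ : y₁ ∈ 𝕀) (hy₂ : y₂ ∈ 𝕀) (hx : x₁ ≤ x₂) (hy : y₁ ≤ y₂) :
    0 ≤ rectVolume (C2 φ ψ Γ) x₁ x₂ y₁ y₂ := by
  have hV := h.locallyBoundedVariationOn_Gtil
  have ha₁ := h.inv_mem y₁ hy₁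
  have ha₂ := h.inv_mem y₂ hy₂
  have ha := h.inv_monotoneOn hy₁ hy₂ hy
  have hx_abs := abs_le.1 (hV.abs_sub_le_variationOnFromTo hx₁ hx₂ hx)
  have ha_abs := abs_le.1 (hV.abs_sub_le_variationOnFromTo ha₁ ha₂ ha)
  have hx_le := variationOnFromTo_le_sub_of_abs_sub_le h.abs_sub_Gtil_le' hx₁ hx₂ hx
  have ha_le := variationOnFromTo_le_sub_of_abs_sub_le h.abs_sub_Gtil_le ha₁ ha₂ ha
  have e₁ := h.f2_sub_f2 hx₁ hx₂ hy₁ hy₁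
  have e₂ := h.f2_sub_f2 hx₁ hx₁ hy₁ hy₂
  have e₃ := h.f2_sub_f2 hx₁ hx₂ hy₁ hy₂
  have hφ₁ := h.apply_inv y₁ hy₁
  have hφ₂ := h.apply_inv y₂ hy₂
  simp only [sV, variationOnFromTo.self, Gtil] at *
  exact rectVolume_min_min_nonneg hx hy (by unfold rectVolume; linarith) (by linarith)
    (by linarith) (by linarith) (by linarith)

theorem C1_apply_self (h : IsCurvilinearSection φ ψ Γ) (hx : x ∈ 𝕀) : C1 ψ Γ x (φ x) = Γ x := by
  have : f1 ψ Γ x (φ x) = Γ x := by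
    simp only [f1, h.inv_apply x hx, sV, variationOnFromTo.self, Ghat]; ring
  rw [C1, this, min_eq_right (h.section_le_apply hx), min_eq_right (h.section_le_self hx)]

theorem C2_apply_self (h : IsCurvilinearSection φ ψ Γ) (hx : x ∈ 𝕀) :
    C2 φ ψ Γ x (φ x) = Γ x := by
  have : f2 φ ψ Γ x (φ x) = Γ x := by
    simp only [f2, h.inv_apply x hx, sV, variationOnFromTo.self, Gtil]; ring
  rw [C2, this, min_eq_right (h.section_le_apply hx), min_eq_right (h.section_le_self hx)]

theorem le_f1 (h : IsCurvilinearSection φ ψ Γ) (hx : x ∈ 𝕀) (hy : y ∈ 𝕀) (hyx : ψ y ≤ x) :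
    Γ (ψ y) ≤ f1 ψ Γ x y := by
  have := variationOnFromTo_le_sub_of_abs_sub_le h.abs_sub_Ghat_le (h.inv_mem y hy) hx hyx
  simp only [f1, sV, Ghat] at *
  linarith

theorem le_f2 (h : IsCurvilinearSection φ ψ Γ) (hx : x ∈ 𝕀) (hy : y ∈ 𝕀) (hxy : x ≤ ψ y) :
    Γ x ≤ f2 φ ψ Γ x y := by
  have := variationOnFromTo_le_sub_of_abs_sub_le h.abs_sub_Gtil_le hx (h.inv_mem y hy) hxy
  have := h.apply_inv y hy
  simp only [f2, sV, Gtil] at *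
  linarith

theorem splice_of_ge (h : IsCurvilinearSection φ ψ Γ) (hx : x ∈ 𝕀) (hxy : φ x ≤ y) :
    splice φ ψ Γ x y = C2 φ ψ Γ x y := by
  rcases hxy.lt_or_eq with hlt | rfl
  · exact if_neg hlt.not_ge
  · rw [splice_of_le le_rfl, h.C1_apply_self hx, h.C2_apply_self hx]

theorem splice_mem_Icc (h : IsCurvilinearSection φ ψ Γ) (hx : x ∈ 𝕀) (hy : y ∈ 𝕀) :
    splice φ ψ Γ x y ∈ 𝕀 := by
  refine ⟨?_, ?_⟩
  · rcases le_total y (φ x) with hyx | hxy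
    · have := h.le_f1 hx hy ((h.le_apply_iff_inv_le hx hy).1 hyx)
      have := h.section_nonneg (h.inv_mem y hy)
      rw [splice_of_le hyx]
      exact le_min hx.1 (le_min hy.1 (by linarith))
    · have := h.le_f2 hx hy ((h.apply_le_iff_le_inv hx hy).1 hxy)
      have := h.section_nonneg hx
      rw [h.splice_of_ge hx hxy]
      exact le_min hx.1 (le_min hy.1 (by linarith))
  · unfold splice C1 C2
    split_ifs <;> exact (min_le_left _ _).trans hx.2

theorem splice_apply_zero (h : IsCurvilinearSection φ ψ Γ) (hx : x ∈ 𝕀) :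
    splice φ ψ Γ x 0 = 0 := by
  have := h.le_f1 hx ⟨le_rfl, zero_le_one⟩ (by rw [h.inv_zero]; exact hx.1)
  rw [h.inv_zero, h.section_zero] at this
  rw [splice_of_le (h.apply_mem hx).1, C1, min_eq_left this, min_eq_right hx.1]

theorem splice_zero_apply (h : IsCurvilinearSection φ ψ Γ) (hy : y ∈ 𝕀) :
    splice φ ψ Γ 0 y = 0 := by
  have := h.le_f2 ⟨le_rfl, zero_le_one⟩ hy (h.inv_mem y hy).1
  rw [h.section_zero] at this
  rw [h.splice_of_ge ⟨le_rfl, zero_le_one⟩ (by rw [h.map_zero]; exact hy.1), C2,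
    min_eq_left (le_min hy.1 this)]

theorem splice_apply_one (h : IsCurvilinearSection φ ψ Γ) (hx : x ∈ 𝕀) :
    splice φ ψ Γ x 1 = x := by
  have hV := variationOnFromTo_le_sub_of_abs_sub_le h.abs_sub_Gtil_le' hx ⟨zero_le_one, le_rfl⟩
    hx.2
  have : x ≤ f2 φ ψ Γ x 1 := by
    simp only [f2, h.inv_one, sV, Gtil, h.map_one, h.section_one] at hV ⊢
    linarith
  rw [h.splice_of_ge hx (h.apply_mem hx).2, C2, min_eq_left (le_min hx.2 this)]

theorem splice_one_apply (h : IsCurvilinearSection φ ψ Γ) (hy : y ∈ 𝕀) :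
    splice φ ψ Γ 1 y = y := by
  have hV := variationOnFromTo_le_sub_of_abs_sub_le h.abs_sub_Ghat_le' (h.inv_mem y hy)
    ⟨zero_le_one, le_rfl⟩ (h.inv_mem y hy).2
  have := h.apply_inv y hy
  have : y ≤ f1 ψ Γ 1 y := by
    simp only [f1, sV, Ghat, h.map_one, h.section_one] at hV this ⊢
    linarith
  rw [splice_of_le (by rw [h.map_one]; exact hy.2), C1, min_eq_left this, min_eq_right hy.2]

theorem C1_add_C2_le (h : IsCurvilinearSection φ ψ Γ) (hderiv : HasExtremalSlopes φ Γ)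
    (hs : s ∈ 𝕀) (ht : t ∈ 𝕀) (hst : s ≤ t) :
    C1 ψ Γ t (φ s) + C2 φ ψ Γ s (φ t) ≤ Γ s + Γ t := by
  have hf1 : f1 ψ Γ t (φ s) = t - (sV (Ghat Γ) s t + Ghat Γ t + Ghat Γ s) / 2 := by
    rw [f1, h.inv_apply s hs]; ring
  have hf2 : f2 φ ψ Γ s (φ t) = φ t - (sV (Gtil φ Γ) s t + Gtil φ Γ s + Gtil φ Γ t) / 2 := by
    rw [f2, h.inv_apply t ht]; ring
  have hC1 : C1 ψ Γ t (φ s) ≤ φ s ∧ C1 ψ Γ t (φ s) ≤ f1 ψ Γ t (φ s) :=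
    le_min_iff.1 (min_le_right _ _)
  have hC2 : C2 φ ψ Γ s (φ t) ≤ s ∧ C2 φ ψ Γ s (φ t) ≤ f2 φ ψ Γ s (φ t) :=
    ⟨min_le_left _ _, (min_le_right _ _).trans (min_le_right _ _)⟩
  have hhat := h.locallyBoundedVariationOn_Ghat
  have htil := h.locallyBoundedVariationOn_Gtil
  by_contra! hlt
  have hhat_lt : sV (Ghat Γ) s t < Ghat Γ s + Ghat Γ t := by
    simp only [Ghat] at hf1 ⊢; linarith
  have htil_lt : sV (Gtil φ Γ) s t < Gtil φ Γ s + Gtil φ Γ t := by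
    simp only [Gtil] at hf2 ⊢; linarith
  have hinside : ∀ u ∈ Icc s t, Γ u < min u (φ u) := fun u hu => by
    have hu' : u ∈ 𝕀 := ⟨hs.1.trans hu.1, hu.2.trans ht.2⟩
    have := hhat.pos_of_variationOnFromTo_lt hs ht hhat_lt hu' hu.1 hu.2
    have := htil.pos_of_variationOnFromTo_lt hs ht htil_lt hu' hu.1 hu.2
    simp only [Ghat, Gtil] at *
    exact lt_min (by linarith) (by linarith)
  have := sub_add_sub_le_sV_add_sV hderiv hhat htil hs ht hst hinside
  simp only [Ghat, Gtil] at *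
  linarith

theorem rectVolume_splice_nonneg_of_below (h : IsCurvilinearSection φ ψ Γ) (hx₁ : x₁ ∈ 𝕀)
    (hx₂ : x₂ ∈ 𝕀) (hy₁ : y₁ ∈ 𝕀) (hy₂ : y₂ ∈ 𝕀) (hx : x₁ ≤ x₂) (hy : y₁ ≤ y₂)
    (hbelow : y₂ ≤ φ x₁) : 0 ≤ rectVolume (splice φ ψ Γ) x₁ x₂ y₁ y₂ := by
  have hφ := h.monotoneOn hx₁ hx₂ hx
  have := h.rectVolume_C1_nonneg hx₁ hx₂ hy₁ hy₂ hx hy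
  unfold rectVolume at *
  rwa [splice_of_le hbelow, splice_of_le (hy.trans hbelow), splice_of_le (hbelow.trans hφ),
    splice_of_le ((hy.trans hbelow).trans hφ)]

theorem rectVolume_splice_nonneg_of_above (h : IsCurvilinearSection φ ψ Γ) (hx₁ : x₁ ∈ 𝕀)
    (hx₂ : x₂ ∈ 𝕀) (hy₁ : y₁ ∈ 𝕀) (hy₂ : y₂ ∈ 𝕀) (hx : x₁ ≤ x₂) (hy : y₁ ≤ y₂)
    (habove : φ x₂ ≤ y₁) : 0 ≤ rectVolume (splice φ ψ Γ) x₁ x₂ y₁ y₂ := by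
  have hφ := h.monotoneOn hx₁ hx₂ hx
  have := h.rectVolume_C2_nonneg hx₁ hx₂ hy₁ hy₂ hx hy
  unfold rectVolume at *
  rwa [h.splice_of_ge hx₂ habove, h.splice_of_ge hx₂ (habove.trans hy),
    h.splice_of_ge hx₁ (hφ.trans habove), h.splice_of_ge hx₁ ((hφ.trans habove).trans hy)]

theorem rectVolume_splice_nonneg_of_crossing (h : IsCurvilinearSection φ ψ Γ)
    (hderiv : HasExtremalSlopes φ Γ) (hs : s ∈ 𝕀) (ht : t ∈ 𝕀) (hy₁ : y₁ ∈ 𝕀) (hy₂ : y₂ ∈ 𝕀)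
    (hst : s ≤ t) (hy₁s : y₁ ≤ φ s) (hty₂ : φ t ≤ y₂) :
    0 ≤ rectVolume (splice φ ψ Γ) s t y₁ y₂ := by
  have hφ := h.monotoneOn hs ht hst
  have hbottom := h.rectVolume_splice_nonneg_of_below hs ht hy₁ (h.apply_mem hs) hst hy₁s le_rfl
  have htop := h.rectVolume_splice_nonneg_of_above hs ht (h.apply_mem ht) hy₂ hst hty₂ le_rfl
  have hmiddle := h.C1_add_C2_le hderiv hs ht hst
  have e₁ : splice φ ψ Γ s (φ s) = Γ s := (splice_of_le le_rfl).trans (h.C1_apply_self hs)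
  have e₂ : splice φ ψ Γ t (φ t) = Γ t := (splice_of_le le_rfl).trans (h.C1_apply_self ht)
  have e₃ : splice φ ψ Γ t (φ s) = C1 ψ Γ t (φ s) := splice_of_le hφ
  have e₄ : splice φ ψ Γ s (φ t) = C2 φ ψ Γ s (φ t) := h.splice_of_ge hs hφ
  unfold rectVolume at *
  linarith

theorem rectVolume_splice_nonneg_of_le_apply (h : IsCurvilinearSection φ ψ Γ)
    (hderiv : HasExtremalSlopes φ Γ) (hx₁ : x₁ ∈ 𝕀) (hx₂ : x₂ ∈ 𝕀) (hy₁ : y₁ ∈ 𝕀)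
    (hy₂ : y₂ ∈ 𝕀) (hx : x₁ ≤ x₂) (hy : y₁ ≤ y₂) (hy₁x₁ : y₁ ≤ φ x₁) :
    0 ≤ rectVolume (splice φ ψ Γ) x₁ x₂ y₁ y₂ := by
  have ha := h.inv_mem y₂ hy₂
  rcases le_total x₂ (ψ y₂) with hx₂a | hax₂
  · exact h.rectVolume_splice_nonneg_of_crossing hderiv hx₁ hx₂ hy₁ hy₂ hx hy₁x₁
      ((h.apply_le_iff_le_inv hx₂ hy₂).2 hx₂a)
  rcases le_total (ψ y₂) x₁ with hax₁ | hx₁a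
  · exact h.rectVolume_splice_nonneg_of_below hx₁ hx₂ hy₁ hy₂ hx hy
      ((h.le_apply_iff_inv_le hx₁ hy₂).2 hax₁)
  rw [← rectVolume_add_rectVolume _ x₁ (ψ y₂) x₂]
  exact add_nonneg
    (h.rectVolume_splice_nonneg_of_crossing hderiv hx₁ ha hy₁ hy₂ hx₁a hy₁x₁
      (h.apply_inv y₂ hy₂).le)
    (h.rectVolume_splice_nonneg_of_below ha hx₂ hy₁ hy₂ hax₂ hy (h.apply_inv y₂ hy₂).ge)

theorem rectVolume_splice_nonneg (h : IsCurvilinearSection φ ψ Γ) (hderiv : HasExtremalSlopes φ Γ)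
    (hx₁ : x₁ ∈ 𝕀) (hx₂ : x₂ ∈ 𝕀) (hy₁ : y₁ ∈ 𝕀) (hy₂ : y₂ ∈ 𝕀) (hx : x₁ ≤ x₂) (hy : y₁ ≤ y₂) :
    0 ≤ rectVolume (splice φ ψ Γ) x₁ x₂ y₁ y₂ := by
  have ha := h.inv_mem y₁ hy₁
  rcases le_total y₁ (φ x₁) with hy₁x₁ | hx₁y₁
  · exact h.rectVolume_splice_nonneg_of_le_apply hderiv hx₁ hx₂ hy₁ hy₂ hx hy hy₁x₁
  rcases le_total x₂ (ψ y₁) with hx₂a | hax₂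
  · exact h.rectVolume_splice_nonneg_of_above hx₁ hx₂ hy₁ hy₂ hx hy
      ((h.apply_le_iff_le_inv hx₂ hy₁).2 hx₂a)
  rw [← rectVolume_add_rectVolume _ x₁ (ψ y₁) x₂]
  exact add_nonneg
    (h.rectVolume_splice_nonneg_of_above hx₁ ha hy₁ hy₂ ((h.apply_le_iff_le_inv hx₁ hy₁).1 hx₁y₁)
      hy (h.apply_inv y₁ hy₁).le)
    (h.rectVolume_splice_nonneg_of_le_apply hderiv ha hx₂ hy₁ hy₂ hax₂ hy (h.apply_inv y₁ hy₁).ge)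

theorem isCopula_splice (h : IsCurvilinearSection φ ψ Γ) (hderiv : HasExtremalSlopes φ Γ) :
    IsCopula (splice φ ψ Γ) :=
  ⟨fun _ hx _ hy => h.splice_mem_Icc hx hy,
    fun _ hx => ⟨h.splice_apply_zero hx, h.splice_zero_apply hx, h.splice_apply_one hx,
      h.splice_one_apply hx⟩,
    fun _ _ _ _ hx₁ hx₂ hy₁ hy₂ hx hy => h.rectVolume_splice_nonneg hderiv hx₁ hx₂ hy₁ hy₂ hx hy⟩

end IsCurvilinearSection

theorem stmt_15_general
    (φ Γ : ℝ → ℝ)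
    (hφmono : StrictMonoOn φ (Set.Icc 0 1))
    (hφ0 : φ 0 = 0) (hφ1 : φ 1 = 1)
    (hΓrange : ∀ t ∈ Set.Icc (0:ℝ) 1, max 0 (t + φ t - 1) ≤ Γ t ∧ Γ t ≤ min t (φ t))
    (hΓlip : ∀ t₁ t₂ : ℝ, t₁ ∈ Set.Icc (0:ℝ) 1 → t₂ ∈ Set.Icc (0:ℝ) 1 → t₁ ≤ t₂ →
      0 ≤ Γ t₂ - Γ t₁ ∧ Γ t₂ - Γ t₁ ≤ (t₂ - t₁) + (φ t₂ - φ t₁))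
    (ψ : ℝ → ℝ)
    (hψmem : ∀ y ∈ Set.Icc (0:ℝ) 1, ψ y ∈ Set.Icc (0:ℝ) 1)
    (hψφ : ∀ t ∈ Set.Icc (0:ℝ) 1, ψ (φ t) = t)
    (hφψ : ∀ y ∈ Set.Icc (0:ℝ) 1, φ (ψ y) = y)
    (hderiv : ∀ᵐ t ∂(volume : Measure ℝ), (t ∈ Set.Icc (0:ℝ) 1 ∧ Γ t < min t (φ t)) →
      ∃ dφ dΓ : ℝ, HasDerivAt φ dφ t ∧ HasDerivAt Γ dΓ t ∧ (dΓ = 0 ∨ dΓ = 1 + dφ)) :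
    IsCopula (splice φ ψ Γ) :=
  (IsCurvilinearSection.mk hφmono hφ0 hφ1 hΓrange hΓlip hψmem hψφ hφψ).isCopula_splice hderiv

theorem stmt_15
    (φ Γ : ℝ → ℝ)
    (hφcont : ContinuousOn φ (Set.Icc 0 1))
    (hφmono : StrictMonoOn φ (Set.Icc 0 1))
    (hφ0 : φ 0 = 0) (hφ1 : φ 1 = 1)
    (hΓrange : ∀ t ∈ Set.Icc (0:ℝ) 1, max 0 (t + φ t - 1) ≤ Γ t ∧ Γ t ≤ min t (φ t))
    (hΓlip : ∀ t₁ t₂ : ℝ, t₁ ∈ Set.Icc (0:ℝ) 1 → t₂ ∈ Set.Icc (0:ℝ) 1 → t₁ ≤ t₂ →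
      0 ≤ Γ t₂ - Γ t₁ ∧ Γ t₂ - Γ t₁ ≤ (t₂ - t₁) + (φ t₂ - φ t₁))
    (ψ : ℝ → ℝ)
    (hψmem : ∀ y ∈ Set.Icc (0:ℝ) 1, ψ y ∈ Set.Icc (0:ℝ) 1)
    (hψφ : ∀ t ∈ Set.Icc (0:ℝ) 1, ψ (φ t) = t)
    (hφψ : ∀ y ∈ Set.Icc (0:ℝ) 1, φ (ψ y) = y)
    (hderiv : ∀ᵐ t ∂(volume : Measure ℝ), (t ∈ Set.Icc (0:ℝ) 1 ∧ Γ t < min t (φ t)) →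
      ∃ dφ dΓ : ℝ, HasDerivAt φ dφ t ∧ HasDerivAt Γ dΓ t ∧ (dΓ = 0 ∨ dΓ = 1 + dφ)) :
    IsCopula (splice φ ψ Γ) :=
  stmt_15_general φ Γ hφmono hφ0 hφ1 hΓrange hΓlip ψ hψmem hψφ hφψ hderiv
end

section
/- The φ-splice C₂ ▵_φ C₁ equals A_Γ (as functions on [0,1]²) if and only if for every (x, y) ∈ [0,1]² the following two conditions are satisfied: (i) if y > φ(x) and min_{t ∈ [x, φ⁻¹(y)]} Γ̃(t) < min{Γ̃(x), Γ̃(φ⁻¹(y))}, then y − x > max{Γ̃(x), Γ̃(φ⁻¹(y))}; (ii) if y < φ(x) and min_{t ∈ [φ⁻¹(y), x]} Γ̂(t) < min{Γ̂(x), Γ̂(φ⁻¹(y))}, then x − y > max{Γ̂(x), Γ̂(φ⁻¹(y))}. -/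
open Set MeasureTheory

/-!
On each side of the graph of `φ` both functions only see an interval `[a, b]`
(`a = φ⁻¹ y`, `b = x` below the graph, `a = x`, `b = φ⁻¹ y` above it) and `h = Γ̂` or `Γ̃`:
with `(A, B) = (id, φ)` or `(φ, id)`, the splice is `min (B a) (A b - (V_a^b h + h a + h b) / 2)`
and `A_Γ` is `min (B a) (A b - max h)`. Always `V_a^b h ≥ 2 max h - h a - h b`, with equality when
`h` has no valley on `[a, b]`, i.e. is quasiconcave there. A valley makes the inequality strict,
so equality of the two functions forces `B a ≤ A b - (V_a^b h + h a + h b) / 2`, hence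
`max (h a) (h b) < A b - B a`. Conversely, if every valley `[p, r]` has `max (h p) (h r) < A r - B p`,
cut `[a, b]` at the first right end `r₀` of a valley: `h` is quasiconcave on `[a, r₀]`, its values
there are at most `A r₀ - B a`, and on `[r₀, b]` the variation of `h = A - Γ` is at most the
increments of `A` and `Γ`; together these give `B a ≤ A b - (V_a^b h + h a + h b) / 2` again.
-/

open Topology

section Variation

variable {α E : Type*} [LinearOrder α] [SeminormedAddCommGroup E]

theorem eVariationOn_sub_le (f g : α → E) (s : Set α) :
    eVariationOn (f - g) s ≤ eVariationOn f s + eVariationOn g s := by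
  refine iSup_le fun ⟨n, u, hu, us⟩ => ?_
  calc ∑ i ∈ Finset.range n, edist ((f - g) (u (i + 1))) ((f - g) (u i))
      ≤ ∑ i ∈ Finset.range n,
          (edist (f (u (i + 1))) (f (u i)) + edist (g (u (i + 1))) (g (u i))) := by
        refine Finset.sum_le_sum fun i _ => ?_
        simpa only [Pi.sub_apply, sub_eq_add_neg, edist_neg_neg] using
          edist_add_add_le (f (u (i + 1))) (-g (u (i + 1))) (f (u i)) (-g (u i))
    _ ≤ eVariationOn f s + eVariationOn g s := by
        rw [Finset.sum_add_distrib]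
        exact add_le_add (eVariationOn.sum_le (f := f) hu us) (eVariationOn.sum_le (f := g) hu us)

theorem eVariationOn_neg (f : α → E) (s : Set α) :
    eVariationOn (fun x => -f x) s = eVariationOn f s := by
  simp [eVariationOn, edist_neg_neg]

theorem LocallyBoundedVariationOn.sub {f g : α → E} {s : Set α}
    (hf : LocallyBoundedVariationOn f s) (hg : LocallyBoundedVariationOn g s) :
    LocallyBoundedVariationOn (f - g) s := fun a b ha hb =>
  ne_top_of_le_ne_top (ENNReal.add_ne_top.2 ⟨hf a b ha hb, hg a b ha hb⟩)
    (eVariationOn_sub_le f g _)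

end Variation

section RealVariation

variable {α : Type*} [LinearOrder α] {s : Set α} {f A : α → ℝ} {a b c : α}

theorem abs_sub_le_variationOnFromTo (hf : LocallyBoundedVariationOn f s) (ha : a ∈ s)
    (hb : b ∈ s) (hab : a ≤ b) : |f b - f a| ≤ variationOnFromTo f s a b := by
  simpa [variationOnFromTo.self] using
    variationOnFromTo.abs_sub_le_sub_of_le hf ha ha hb hab

theorem two_mul_sub_le_variationOnFromTo (hf : LocallyBoundedVariationOn f s) (ha : a ∈ s)
    (hb : b ∈ s) (hc : c ∈ s) (hac : a ≤ c) (hcb : c ≤ b) :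
    2 * f c - f a - f b ≤ variationOnFromTo f s a b := by
  rw [← variationOnFromTo.add hf ha hc hb]
  have hl := abs_sub_le_variationOnFromTo hf ha hc hac
  have hr := abs_sub_le_variationOnFromTo hf hc hb hcb
  linarith [le_abs_self (f c - f a), neg_abs_le (f b - f c)]

theorem locallyBoundedVariationOn_of_monotoneOn_sub (hA : MonotoneOn A s)
    (hG : MonotoneOn (A - f) s) : LocallyBoundedVariationOn f s := by
  simpa using hA.locallyBoundedVariationOn.sub hG.locallyBoundedVariationOn

theorem variationOnFromTo_le_of_monotoneOn_sub (hA : MonotoneOn A s)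
    (hG : MonotoneOn (A - f) s) (ha : a ∈ s) (hb : b ∈ s) (hab : a ≤ b) :
    variationOnFromTo f s a b ≤ (A b - A a) + ((A - f) b - (A - f) a) := by
  have hle : eVariationOn f (s ∩ Icc a b)
      ≤ ENNReal.ofReal (A b - A a) + ENNReal.ofReal ((A - f) b - (A - f) a) := by
    rw [← hA.eVariationOn_eq ha hb, ← hG.eVariationOn_eq ha hb]
    simpa using eVariationOn_sub_le A (A - f) (s ∩ Icc a b)
  rw [variationOnFromTo.eq_of_le _ _ hab]
  refine (ENNReal.toReal_mono (by finiteness) hle).trans_eq ?_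
  rw [ENNReal.toReal_add (by finiteness) (by finiteness),
    ENNReal.toReal_ofReal (sub_nonneg.2 (hA ha hb hab)),
    ENNReal.toReal_ofReal (sub_nonneg.2 (hG ha hb hab))]

end RealVariation

section Quasiconcave

variable {s : Set ℝ} {f : ℝ → ℝ} {a b c p q r : ℝ}

theorem QuasiconcaveOn.min_le (hf : QuasiconcaveOn ℝ s f) (hp : p ∈ s) (hr : r ∈ s)
    (hq : q ∈ Icc p r) : min (f p) (f r) ≤ f q :=
  ((hf _).ordConnected.out ⟨hp, min_le_left _ _⟩ ⟨hr, min_le_right _ _⟩ hq).2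

theorem quasiconcaveOn_of_forall_min_le [s.OrdConnected]
    (H : ∀ p ∈ s, ∀ q, ∀ r ∈ s, p < q → q < r → min (f p) (f r) ≤ f q) :
    QuasiconcaveOn ℝ s f := by
  refine fun m => convex_iff_ordConnected.2 ⟨fun x hx y hy z hz => ⟨s.Icc_subset hx.1 hy.1 hz, ?_⟩⟩
  rcases hz.1.eq_or_lt with rfl | hxz
  · exact hx.2
  rcases hz.2.eq_or_lt with rfl | hzy
  · exact hy.2
  exact (le_min hx.2 hy.2).trans (H x hx.1 z y hy.1 hxz hzy)

theorem QuasiconcaveOn.monotoneOn_Icc_left (hf : QuasiconcaveOn ℝ (Icc a b) f)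
    (hc : c ∈ Icc a b) (hmax : ∀ t ∈ Icc a b, f t ≤ f c) : MonotoneOn f (Icc a c) := by
  intro x hx y hy hxy
  have hxab : x ∈ Icc a b := ⟨hx.1, hx.2.trans hc.2⟩
  simpa [min_eq_left (hmax x hxab)] using hf.min_le hxab hc ⟨hxy, hy.2⟩

theorem QuasiconcaveOn.antitoneOn_Icc_right (hf : QuasiconcaveOn ℝ (Icc a b) f)
    (hc : c ∈ Icc a b) (hmax : ∀ t ∈ Icc a b, f t ≤ f c) : AntitoneOn f (Icc c b) := by
  intro x hx y hy hxy
  have hyab : y ∈ Icc a b := ⟨hc.1.trans hy.1, hy.2⟩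
  simpa [min_eq_right (hmax y hyab)] using hf.min_le hc hyab ⟨hx.1, hxy⟩

theorem QuasiconcaveOn.eVariationOn_Icc_eq (hf : QuasiconcaveOn ℝ (Icc a b) f)
    (hc : c ∈ Icc a b) (hmax : ∀ t ∈ Icc a b, f t ≤ f c) :
    eVariationOn f (Icc a b) = ENNReal.ofReal (f c - f a) + ENNReal.ofReal (f c - f b) := by
  have hup := (hf.monotoneOn_Icc_left hc hmax).eVariationOn_eq
    (left_mem_Icc.2 hc.1) (right_mem_Icc.2 hc.1)
  have hdown := (hf.antitoneOn_Icc_right hc hmax).neg.eVariationOn_eq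
    (left_mem_Icc.2 hc.2) (right_mem_Icc.2 hc.2)
  rw [inter_self] at hup hdown
  rw [eVariationOn_neg, neg_sub_neg] at hdown
  simpa [hup, hdown] using (eVariationOn.Icc_add_Icc f (s := univ) hc.1 hc.2 trivial).symm

theorem QuasiconcaveOn.variationOnFromTo_eq [s.OrdConnected] (ha : a ∈ s) (hb : b ∈ s)
    (hf : QuasiconcaveOn ℝ (Icc a b) f) (hc : c ∈ Icc a b) (hmax : ∀ t ∈ Icc a b, f t ≤ f c) :
    variationOnFromTo f s a b = 2 * f c - f a - f b := by
  rw [variationOnFromTo.eq_of_le _ _ (hc.1.trans hc.2), inter_eq_right.2 (s.Icc_subset ha hb),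
    hf.eVariationOn_Icc_eq hc hmax, ENNReal.toReal_add (by finiteness) (by finiteness),
    ENNReal.toReal_ofReal (sub_nonneg.2 (hmax a (left_mem_Icc.2 (hc.1.trans hc.2)))),
    ENNReal.toReal_ofReal (sub_nonneg.2 (hmax b (right_mem_Icc.2 (hc.1.trans hc.2))))]
  ring

end Quasiconcave

section Valley

def IsValley (f : ℝ → ℝ) (p q r : ℝ) : Prop :=
  p < q ∧ q < r ∧ f q < min (f p) (f r)

variable {s : Set ℝ} {f : ℝ → ℝ} {a b p q r : ℝ}

theorem sInf_image_Icc_lt_min_iff (hpr : p ≤ r) (hf : ContinuousOn f (Icc p r)) :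
    sInf (f '' Icc p r) < min (f p) (f r) ↔ ∃ q, IsValley f p q r := by
  obtain ⟨m, hm, hinf, hmin⟩ :=
    isCompact_Icc.exists_sInf_image_eq_and_le (nonempty_Icc.2 hpr) hf
  rw [hinf]
  constructor
  · intro hlt
    refine ⟨m, lt_of_le_of_ne hm.1 ?_, lt_of_le_of_ne hm.2 ?_, hlt⟩ <;> rintro rfl
    exacts [(min_le_left _ _).not_gt hlt, (min_le_right _ _).not_gt hlt]
  · rintro ⟨q, hpq, hqr, hq⟩
    exact (hmin q ⟨hpq.le, hqr.le⟩).trans_lt hq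

theorem quasiconcaveOn_Icc_of_forall_not_isValley
    (H : ∀ p q r, a ≤ p → r ≤ b → ¬IsValley f p q r) : QuasiconcaveOn ℝ (Icc a b) f :=
  quasiconcaveOn_of_forall_min_le fun p hp q r hr hpq hqr =>
    not_lt.1 fun hq => H p q r hp.1 hr.2 ⟨hpq, hqr, hq⟩

theorem IsValley.exists_lt_right (hv : IsValley f p q r)
    (hf : ContinuousWithinAt f (Ioo q r) r) : ∃ r' < r, IsValley f p q r' := by
  have : (𝓝[Ioo q r] r).NeBot := right_nhdsWithin_Ioo_neBot hv.2.1
  obtain ⟨r', hr', hqr'⟩ := ((hf.eventually_const_lt (lt_of_lt_of_le hv.2.2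
    (min_le_right _ _))).and self_mem_nhdsWithin).exists
  exact ⟨r', hqr'.2, hv.1, hqr'.1, lt_min (lt_of_lt_of_le hv.2.2 (min_le_left _ _)) hr'⟩

/-- The variation over a valley counts the climb out of it twice. -/
theorem IsValley.two_mul_sSup_sub_lt_variationOnFromTo [s.OrdConnected]
    (hv : IsValley f a q b) (hbv : LocallyBoundedVariationOn f s) (hf : ContinuousOn f s)
    (ha : a ∈ s) (hb : b ∈ s) :
    2 * sSup (f '' Icc a b) - f a - f b < variationOnFromTo f s a b := by
  obtain ⟨haq, hqb, hq⟩ := hv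
  have hqs : q ∈ s := s.Icc_subset ha hb ⟨haq.le, hqb.le⟩
  have hcont : ∀ {p r}, p ∈ s → r ∈ s → ContinuousOn f (Icc p r) :=
    fun hp hr => hf.mono (s.Icc_subset hp hr)
  obtain ⟨c, hc, hsup, -⟩ := isCompact_Icc.exists_sSup_image_eq_and_ge
    (nonempty_Icc.2 (haq.trans hqb).le) (hcont ha hb)
  obtain ⟨c₁, hc₁, -, hmax₁⟩ := isCompact_Icc.exists_sSup_image_eq_and_ge
    (nonempty_Icc.2 haq.le) (hcont ha hqs)
  obtain ⟨c₂, hc₂, -, hmax₂⟩ := isCompact_Icc.exists_sSup_image_eq_and_ge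
    (nonempty_Icc.2 hqb.le) (hcont hqs hb)
  have hs₁ := s.Icc_subset ha hqs hc₁
  have hs₂ := s.Icc_subset hqs hb hc₂
  have h₁ := two_mul_sub_le_variationOnFromTo hbv ha hqs hs₁ hc₁.1 hc₁.2
  have h₂ := two_mul_sub_le_variationOnFromTo hbv hqs hb hs₂ hc₂.1 hc₂.2
  have ha₁ := hmax₁ a (left_mem_Icc.2 haq.le)
  have hb₂ := hmax₂ b (right_mem_Icc.2 hqb.le)
  have hqa := lt_of_lt_of_le hq (min_le_left _ _)
  have hqb' := lt_of_lt_of_le hq (min_le_right _ _)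
  rw [hsup, ← variationOnFromTo.add hbv ha hqs hb]
  rcases le_total c q with hcq | hqc
  · linarith [hmax₁ c ⟨hc.1, hcq⟩]
  · linarith [hmax₂ c ⟨hqc, hc.2⟩]

end Valley

section Splice

variable {s : Set ℝ} {h A B : ℝ → ℝ} {a b p q r : ℝ}

theorem max_lt_sub_of_min_eq_min [s.OrdConnected] (hbv : LocallyBoundedVariationOn h s)
    (hh : ContinuousOn h s) (ha : a ∈ s) (hb : b ∈ s) (hab : a ≤ b) {u v : ℝ}
    (heq : min u (v - (1/2) * (variationOnFromTo h s a b + h a + h b))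
      = min u (v - sSup (h '' Icc a b)))
    (hinf : sInf (h '' Icc a b) < min (h a) (h b)) :
    max (h a) (h b) < v - u := by
  obtain ⟨q, hv⟩ := (sInf_image_Icc_lt_min_iff hab (hh.mono (s.Icc_subset ha hb))).1 hinf
  have hV := hv.two_mul_sSup_sub_lt_variationOnFromTo hbv hh ha hb
  have hbdd : BddAbove (h '' Icc a b) :=
    (isCompact_Icc.image_of_continuousOn (hh.mono (s.Icc_subset ha hb))).bddAbove
  have hha := le_csSup hbdd (mem_image_of_mem h (left_mem_Icc.2 hab))
  have hhb := le_csSup hbdd (mem_image_of_mem h (right_mem_Icc.2 hab))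
  have hu : u ≤ v - (1/2) * (variationOnFromTo h s a b + h a + h b) := by
    by_contra! hlt
    have hFM : v - (1/2) * (variationOnFromTo h s a b + h a + h b) < v - sSup (h '' Icc a b) := by
      linarith
    rw [min_eq_right hlt.le] at heq
    exact heq.not_lt (lt_min hlt hFM)
  rcases max_cases (h a) (h b) with ⟨hmax, -⟩ | ⟨hmax, -⟩ <;> rw [hmax] <;> linarith

-- Move one end of the valley to a maximiser of `h` on `[a, r]`.
theorem IsValley.lt_sub (hAB : ∀ p q r, a ≤ p → r ≤ b → IsValley h p q r →
      max (h p) (h r) < A r - B p)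
    (hA : MonotoneOn A (Icc a b)) (hB : MonotoneOn B (Icc a b)) (hh : ContinuousOn h (Icc a b))
    (hv : IsValley h p q r) (hp : a ≤ p) (hr : r ≤ b) :
    ∀ t ∈ Icc a r, h t < A r - B a := by
  obtain ⟨hpq, hqr, hq⟩ := hv
  have hsub : Icc a r ⊆ Icc a b := Icc_subset_Icc le_rfl hr
  have har : a ≤ r := (hp.trans hpq.le).trans hqr.le
  obtain ⟨c, hc, -, hmax⟩ :=
    isCompact_Icc.exists_sSup_image_eq_and_ge (nonempty_Icc.2 har) (hh.mono hsub)
  have hqc : h q < h c :=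
    (hq.trans_le (min_le_left _ _)).trans_le (hmax p ⟨hp, (hpq.trans hqr).le⟩)
  intro t ht
  refine (hmax t ht).trans_lt ?_
  rcases lt_or_gt_of_ne (show c ≠ q by rintro rfl; exact hqc.false) with hcq | hqc'
  · have := hAB c q r hc.1 hr ⟨hcq, hqr, lt_min hqc (hq.trans_le (min_le_right _ _))⟩
    have := hB ⟨le_rfl, har.trans hr⟩ (hsub hc) hc.1
    linarith [le_max_left (h c) (h r)]
  · have := hAB p q c hp (hc.2.trans hr) ⟨hpq, hqc', lt_min (hq.trans_le (min_le_left _ _)) hqc⟩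
    have := hB ⟨le_rfl, har.trans hr⟩ ⟨hp, (hpq.trans hqr).le.trans hr⟩ hp
    have := hA (hsub hc) ⟨har, hr⟩ hc.2
    linarith [le_max_right (h p) (h c)]

-- `r₀` is the first right end of a valley; the bound reaches it from the valleys to its right
-- by continuity of `A`.
theorem exists_quasiconcaveOn_Icc_and_add_le (hAB : ∀ p q r, a ≤ p → r ≤ b → IsValley h p q r →
      max (h p) (h r) < A r - B p)
    (hA : MonotoneOn A (Icc a b)) (hAc : ContinuousOn A (Icc a b))
    (hB : MonotoneOn B (Icc a b)) (hh : ContinuousOn h (Icc a b))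
    (hval : ∃ p q r, a ≤ p ∧ r ≤ b ∧ IsValley h p q r) :
    ∃ r₀ ∈ Icc a b, QuasiconcaveOn ℝ (Icc a r₀) h ∧ ∀ t ∈ Icc a r₀, h t + B a ≤ A r₀ := by
  set R := {r | ∃ p q, a ≤ p ∧ r ≤ b ∧ IsValley h p q r}
  obtain ⟨p, q, r, hp, hrb, hv⟩ := hval
  have hR : R.Nonempty := ⟨r, p, q, hp, hrb, hv⟩
  have haR : ∀ r ∈ R, a ≤ r := fun r ⟨p, q, hp, _, hv⟩ => hp.trans (hv.1.trans hv.2.1).le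
  have hbdd : BddBelow R := ⟨a, haR⟩
  have hR₀ : sInf R ∈ Icc a b := ⟨le_csInf hR haR, (csInf_le hbdd ⟨p, q, hp, hrb, hv⟩).trans hrb⟩
  refine ⟨sInf R, hR₀, quasiconcaveOn_Icc_of_forall_not_isValley fun p q r hp hr hv => ?_,
    fun t ht => ?_⟩
  · have hrab : r ∈ Icc a b := ⟨hp.trans (hv.1.trans hv.2.1).le, hr.trans hR₀.2⟩
    obtain ⟨r', hr'r, hv'⟩ := hv.exists_lt_right ((hh r hrab).mono
      fun t ht => ⟨(hp.trans hv.1.le).trans ht.1.le, ht.2.le.trans hrab.2⟩)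
    exact (csInf_le hbdd ⟨p, q, hp, (hr'r.trans_le hr).le.trans hR₀.2, hv'⟩).not_gt
      (hr'r.trans_le hr)
  · have hclosed : IsClosed (Icc a b ∩ A ⁻¹' Ici (h t + B a)) :=
      hAc.preimage_isClosed_of_isClosed isClosed_Icc isClosed_Ici
    have hsub : R ⊆ Icc a b ∩ A ⁻¹' Ici (h t + B a) := by
      rintro r ⟨p, q, hp, hrb, hv⟩
      have := hv.lt_sub hAB hA hB hh hp hrb t ⟨ht.1, ht.2.trans (csInf_le hbdd ⟨p, q, hp, hrb, hv⟩)⟩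
      exact ⟨⟨haR r ⟨p, q, hp, hrb, hv⟩, hrb⟩, by simp only [mem_preimage, mem_Ici]; linarith⟩
    exact (hclosed.closure_subset_iff.2 hsub (csInf_mem_closure hR hbdd)).2

theorem min_eq_min_of_forall_max_lt_sub [s.OrdConnected] (ha : a ∈ s) (hb : b ∈ s) (hab : a ≤ b)
    (hh : ContinuousOn h s) (hA : MonotoneOn A s) (hAc : ContinuousOn A s)
    (hG : MonotoneOn (A - h) s) (hB : MonotoneOn B s)
    (hAB : ∀ p ∈ Icc a b, ∀ r ∈ Icc a b, p < r → sInf (h '' Icc p r) < min (h p) (h r) →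
      max (h p) (h r) < A r - B p) :
    min (B a) (A b - (1/2) * (variationOnFromTo h s a b + h a + h b))
      = min (B a) (A b - sSup (h '' Icc a b)) := by
  have hbv := locallyBoundedVariationOn_of_monotoneOn_sub hA hG
  have hsub := s.Icc_subset ha hb
  obtain ⟨c, hc, hsup, hmax⟩ :=
    isCompact_Icc.exists_sSup_image_eq_and_ge (nonempty_Icc.2 hab) (hh.mono hsub)
  have hAB' : ∀ p q r, a ≤ p → r ≤ b → IsValley h p q r → max (h p) (h r) < A r - B p :=
    fun p q r hp hr hv =>
      have hpr : p < r := hv.1.trans hv.2.1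
      hAB p ⟨hp, hpr.le.trans hr⟩ r ⟨hp.trans hpr.le, hr⟩ hpr <|
        (sInf_image_Icc_lt_min_iff hpr.le (hh.mono ((Icc_subset_Icc hp hr).trans hsub))).2 ⟨q, hv⟩
  by_cases hval : ∃ p q r, a ≤ p ∧ r ≤ b ∧ IsValley h p q r
  · obtain ⟨r₀, hr₀, hqc, hle⟩ := exists_quasiconcaveOn_Icc_and_add_le hAB' (hA.mono hsub)
      (hAc.mono hsub) (hB.mono hsub) (hh.mono hsub) hval
    have hr₀s := hsub hr₀
    obtain ⟨c₀, hc₀, -, hmax₀⟩ := isCompact_Icc.exists_sSup_image_eq_and_ge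
      (nonempty_Icc.2 hr₀.1) (hh.mono (s.Icc_subset ha hr₀s))
    have hleft := hqc.variationOnFromTo_eq ha hr₀s hc₀ hmax₀
    have hright := variationOnFromTo_le_of_monotoneOn_sub hA hG hr₀s hb hr₀.2
    have hlow := two_mul_sub_le_variationOnFromTo hbv ha hb (hsub hc) hc.1 hc.2
    simp only [Pi.sub_apply] at hright
    have hBF : B a ≤ A b - (1/2) * (variationOnFromTo h s a b + h a + h b) := by
      rw [← variationOnFromTo.add hbv ha hr₀s hb, hleft]
      linarith [hle c₀ hc₀]
    have hFM : A b - (1/2) * (variationOnFromTo h s a b + h a + h b)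
        ≤ A b - sSup (h '' Icc a b) := by
      rw [hsup]; linarith
    rw [min_eq_left hBF, min_eq_left (hBF.trans hFM)]
  · push Not at hval
    rw [hsup, (quasiconcaveOn_Icc_of_forall_not_isValley hval).variationOnFromTo_eq ha hb hc hmax]
    ring_nf

end Splice

theorem ContinuousOn.of_sub_le_sub {f g : ℝ → ℝ} {s : Set ℝ} (hg : ContinuousOn g s)
    (H : ∀ x ∈ s, ∀ y ∈ s, x ≤ y → 0 ≤ f y - f x ∧ f y - f x ≤ g y - g x) :
    ContinuousOn f s := by
  have habs : ∀ x ∈ s, ∀ y ∈ s, |f y - f x| ≤ |g y - g x| := by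
    intro x hx y hy
    rcases le_total x y with hxy | hyx
    · obtain ⟨h₀, h₁⟩ := H x hx y hy hxy
      rwa [abs_of_nonneg h₀, abs_of_nonneg (h₀.trans h₁)]
    · obtain ⟨h₀, h₁⟩ := H y hy x hx hyx
      rwa [abs_sub_comm, abs_of_nonneg h₀, abs_sub_comm, abs_of_nonneg (h₀.trans h₁)]
  intro x hx
  have hgx := hg x hx
  rw [Metric.continuousWithinAt_iff] at hgx ⊢
  intro ε hε
  obtain ⟨δ, hδ, hgδ⟩ := hgx ε hε
  refine ⟨δ, hδ, fun {y} hy hyx => ?_⟩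
  have hgy := hgδ hy hyx
  rw [Real.dist_eq] at hgy ⊢
  exact (habs x hx y hy).trans_lt hgy

structure SpliceSetting (φ ψ Γ : ℝ → ℝ) : Prop where
  continuousOn_φ : ContinuousOn φ (Icc 0 1)
  strictMonoOn_φ : StrictMonoOn φ (Icc 0 1)
  mapsTo_φ : MapsTo φ (Icc 0 1) (Icc 0 1)
  mapsTo_ψ : MapsTo ψ (Icc 0 1) (Icc 0 1)
  leftInvOn : LeftInvOn ψ φ (Icc 0 1)
  rightInvOn : RightInvOn ψ φ (Icc 0 1)
  continuousOn_Γ : ContinuousOn Γ (Icc 0 1)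
  monotoneOn_Γ : MonotoneOn Γ (Icc 0 1)
  le_min : ∀ t ∈ Icc (0:ℝ) 1, Γ t ≤ min t (φ t)

def ConditionAbove (φ ψ Γ : ℝ → ℝ) (x y : ℝ) : Prop :=
  φ x < y ∧ sInf (Gtil φ Γ '' Icc x (ψ y)) < min (Gtil φ Γ x) (Gtil φ Γ (ψ y)) →
    y - x > max (Gtil φ Γ x) (Gtil φ Γ (ψ y))

def ConditionBelow (φ ψ Γ : ℝ → ℝ) (x y : ℝ) : Prop :=
  y < φ x ∧ sInf (Ghat Γ '' Icc (ψ y) x) < min (Ghat Γ x) (Ghat Γ (ψ y)) →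
    x - y > max (Ghat Γ x) (Ghat Γ (ψ y))

namespace SpliceSetting

variable {φ ψ Γ : ℝ → ℝ} {x y : ℝ}

theorem ghat_nonneg (H : SpliceSetting φ ψ Γ) {t : ℝ} (ht : t ∈ Icc (0:ℝ) 1) : 0 ≤ Ghat Γ t :=
  sub_nonneg.2 ((H.le_min t ht).trans (min_le_left _ _))

theorem gtil_nonneg (H : SpliceSetting φ ψ Γ) {t : ℝ} (ht : t ∈ Icc (0:ℝ) 1) :
    0 ≤ Gtil φ Γ t :=
  sub_nonneg.2 ((H.le_min t ht).trans (min_le_right _ _))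

theorem continuousOn_ghat (H : SpliceSetting φ ψ Γ) : ContinuousOn (Ghat Γ) (Icc 0 1) :=
  continuousOn_id.sub H.continuousOn_Γ

theorem continuousOn_gtil (H : SpliceSetting φ ψ Γ) : ContinuousOn (Gtil φ Γ) (Icc 0 1) :=
  H.continuousOn_φ.sub H.continuousOn_Γ

theorem monotoneOn_id_sub_ghat (H : SpliceSetting φ ψ Γ) :
    MonotoneOn (id - Ghat Γ) (Icc 0 1) := fun s hs t ht hst => by
  simpa [Ghat] using H.monotoneOn_Γ hs ht hst

theorem monotoneOn_sub_gtil (H : SpliceSetting φ ψ Γ) :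
    MonotoneOn (φ - Gtil φ Γ) (Icc 0 1) := fun s hs t ht hst => by
  simpa [Gtil] using H.monotoneOn_Γ hs ht hst

theorem psi_le (H : SpliceSetting φ ψ Γ) (hx : x ∈ Icc (0:ℝ) 1) (hy : y ∈ Icc (0:ℝ) 1)
    (hyx : y ≤ φ x) : ψ y ≤ x :=
  (H.strictMonoOn_φ.le_iff_le (H.mapsTo_ψ hy) hx).1 (by rwa [H.rightInvOn hy])

theorem le_psi (H : SpliceSetting φ ψ Γ) (hx : x ∈ Icc (0:ℝ) 1) (hy : y ∈ Icc (0:ℝ) 1)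
    (hxy : φ x < y) : x ≤ ψ y :=
  ((H.strictMonoOn_φ.lt_iff_lt hx (H.mapsTo_ψ hy)).1 (by rwa [H.rightInvOn hy])).le

theorem splice_eq_AG_iff_of_le (H : SpliceSetting φ ψ Γ) (hx : x ∈ Icc (0:ℝ) 1)
    (hy : y ∈ Icc (0:ℝ) 1) (hyx : y ≤ φ x) :
    splice φ ψ Γ x y = AG φ ψ Γ x y ↔
      min y (x - (1/2) * (variationOnFromTo (Ghat Γ) (Icc 0 1) (ψ y) x + Ghat Γ (ψ y) + Ghat Γ x))
        = min y (x - sSup (Ghat Γ '' Icc (ψ y) x)) := by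
  have hf : f1 ψ Γ x y ≤ x := by
    have := variationOnFromTo.nonneg_of_le (Ghat Γ) (Icc 0 1) (H.psi_le hx hy hyx)
    have := H.ghat_nonneg hx
    have := H.ghat_nonneg (H.mapsTo_ψ hy)
    unfold f1 sV; linarith
  rw [splice, if_pos hyx, C1, AG, if_pos hyx, min_eq_right ((min_le_right _ _).trans hf), f1, sV,
    add_right_comm]

theorem splice_eq_AG_iff_of_lt (H : SpliceSetting φ ψ Γ) (hx : x ∈ Icc (0:ℝ) 1)
    (hy : y ∈ Icc (0:ℝ) 1) (hxy : φ x < y) :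
    splice φ ψ Γ x y = AG φ ψ Γ x y ↔
      min x (y - (1/2) * (variationOnFromTo (Gtil φ Γ) (Icc 0 1) x (ψ y) + Gtil φ Γ x
        + Gtil φ Γ (ψ y))) = min x (y - sSup (Gtil φ Γ '' Icc x (ψ y))) := by
  have hf : f2 φ ψ Γ x y ≤ y := by
    have := variationOnFromTo.nonneg_of_le (Gtil φ Γ) (Icc 0 1) (H.le_psi hx hy hxy)
    have := H.gtil_nonneg hx
    have := H.gtil_nonneg (H.mapsTo_ψ hy)
    unfold f2 sV; linarith
  rw [splice, if_neg hxy.not_ge, C2, AG, if_neg hxy.not_ge, min_eq_right hf, f2, sV]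

theorem conditionAbove_of_splice_eq_AG (H : SpliceSetting φ ψ Γ) (hx : x ∈ Icc (0:ℝ) 1)
    (hy : y ∈ Icc (0:ℝ) 1) (heq : splice φ ψ Γ x y = AG φ ψ Γ x y) :
    ConditionAbove φ ψ Γ x y := fun ⟨hxy, hinf⟩ =>
  max_lt_sub_of_min_eq_min
    (locallyBoundedVariationOn_of_monotoneOn_sub H.strictMonoOn_φ.monotoneOn H.monotoneOn_sub_gtil)
    H.continuousOn_gtil hx (H.mapsTo_ψ hy) (H.le_psi hx hy hxy)
    ((H.splice_eq_AG_iff_of_lt hx hy hxy).1 heq) hinf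

theorem conditionBelow_of_splice_eq_AG (H : SpliceSetting φ ψ Γ) (hx : x ∈ Icc (0:ℝ) 1)
    (hy : y ∈ Icc (0:ℝ) 1) (heq : splice φ ψ Γ x y = AG φ ψ Γ x y) :
    ConditionBelow φ ψ Γ x y := fun ⟨hyx, hinf⟩ => by
  rw [min_comm] at hinf
  rw [gt_iff_lt, max_comm]
  exact max_lt_sub_of_min_eq_min
    (locallyBoundedVariationOn_of_monotoneOn_sub monotoneOn_id H.monotoneOn_id_sub_ghat)
    H.continuousOn_ghat (H.mapsTo_ψ hy) hx (H.psi_le hx hy hyx.le)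
    ((H.splice_eq_AG_iff_of_le hx hy hyx.le).1 heq) hinf

theorem splice_eq_AG_of_le (H : SpliceSetting φ ψ Γ) (hx : x ∈ Icc (0:ℝ) 1)
    (hy : y ∈ Icc (0:ℝ) 1) (hyx : y ≤ φ x)
    (hcond : ∀ x ∈ Icc (0:ℝ) 1, ∀ y ∈ Icc (0:ℝ) 1, ConditionBelow φ ψ Γ x y) :
    splice φ ψ Γ x y = AG φ ψ Γ x y := by
  have hψy := H.mapsTo_ψ hy
  have hsub := Icc_subset_Icc hψy.1 hx.2
  have := min_eq_min_of_forall_max_lt_sub hψy hx (H.psi_le hx hy hyx) H.continuousOn_ghat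
    monotoneOn_id continuousOn_id H.monotoneOn_id_sub_ghat H.strictMonoOn_φ.monotoneOn
    fun p hp r hr hpr hinf => by
      have := hcond r (hsub hr) (φ p) (H.mapsTo_φ (hsub hp))
      rw [ConditionBelow, H.leftInvOn (hsub hp), min_comm, max_comm] at this
      exact this ⟨H.strictMonoOn_φ (hsub hp) (hsub hr) hpr, hinf⟩
  rw [H.rightInvOn hy] at this
  exact (H.splice_eq_AG_iff_of_le hx hy hyx).2 this

theorem splice_eq_AG_of_lt (H : SpliceSetting φ ψ Γ) (hx : x ∈ Icc (0:ℝ) 1)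
    (hy : y ∈ Icc (0:ℝ) 1) (hxy : φ x < y)
    (hcond : ∀ x ∈ Icc (0:ℝ) 1, ∀ y ∈ Icc (0:ℝ) 1, ConditionAbove φ ψ Γ x y) :
    splice φ ψ Γ x y = AG φ ψ Γ x y := by
  have hψy := H.mapsTo_ψ hy
  have hsub := Icc_subset_Icc hx.1 hψy.2
  have := min_eq_min_of_forall_max_lt_sub hx hψy (H.le_psi hx hy hxy) H.continuousOn_gtil
    H.strictMonoOn_φ.monotoneOn H.continuousOn_φ H.monotoneOn_sub_gtil monotoneOn_id
    fun p hp r hr hpr hinf => by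
      have := hcond p (hsub hp) (φ r) (H.mapsTo_φ (hsub hr))
      rw [ConditionAbove, H.leftInvOn (hsub hr)] at this
      exact this ⟨H.strictMonoOn_φ (hsub hp) (hsub hr) hpr, hinf⟩
  rw [H.rightInvOn hy] at this
  exact (H.splice_eq_AG_iff_of_lt hx hy hxy).2 this

end SpliceSetting

theorem stmt_17
    (φ Γ : ℝ → ℝ)
    (hφcont : ContinuousOn φ (Set.Icc 0 1))
    (hφmono : StrictMonoOn φ (Set.Icc 0 1))
    (hφ0 : φ 0 = 0) (hφ1 : φ 1 = 1)
    (hΓrange : ∀ t ∈ Set.Icc (0:ℝ) 1, max 0 (t + φ t - 1) ≤ Γ t ∧ Γ t ≤ min t (φ t))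
    (hΓlip : ∀ t₁ t₂ : ℝ, t₁ ∈ Set.Icc (0:ℝ) 1 → t₂ ∈ Set.Icc (0:ℝ) 1 → t₁ ≤ t₂ →
      0 ≤ Γ t₂ - Γ t₁ ∧ Γ t₂ - Γ t₁ ≤ (t₂ - t₁) + (φ t₂ - φ t₁))
    (ψ : ℝ → ℝ)
    (hψmem : ∀ y ∈ Set.Icc (0:ℝ) 1, ψ y ∈ Set.Icc (0:ℝ) 1)
    (hψφ : ∀ t ∈ Set.Icc (0:ℝ) 1, ψ (φ t) = t)
    (hφψ : ∀ y ∈ Set.Icc (0:ℝ) 1, φ (ψ y) = y) :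
    (∀ x ∈ Set.Icc (0:ℝ) 1, ∀ y ∈ Set.Icc (0:ℝ) 1, splice φ ψ Γ x y = AG φ ψ Γ x y) ↔
      (∀ x ∈ Set.Icc (0:ℝ) 1, ∀ y ∈ Set.Icc (0:ℝ) 1,
        ((φ x < y ∧ sInf (Gtil φ Γ '' Set.Icc x (ψ y)) < min (Gtil φ Γ x) (Gtil φ Γ (ψ y))) →
          y - x > max (Gtil φ Γ x) (Gtil φ Γ (ψ y))) ∧
        ((y < φ x ∧ sInf (Ghat Γ '' Set.Icc (ψ y) x) < min (Ghat Γ x) (Ghat Γ (ψ y))) →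
          x - y > max (Ghat Γ x) (Ghat Γ (ψ y)))) := by
  have H : SpliceSetting φ ψ Γ :=
    { continuousOn_φ := hφcont
      strictMonoOn_φ := hφmono
      mapsTo_φ := fun t ht => ⟨hφ0 ▸ hφmono.monotoneOn ⟨le_rfl, zero_le_one⟩ ht ht.1,
        hφ1 ▸ hφmono.monotoneOn ht ⟨zero_le_one, le_rfl⟩ ht.2⟩
      mapsTo_ψ := hψmem
      leftInvOn := hψφ
      rightInvOn := hφψ
      continuousOn_Γ := ContinuousOn.of_sub_le_sub (g := fun t => t + φ t)
        (continuousOn_id.add hφcont) fun s hs t ht hst => by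
          obtain ⟨h₀, h₁⟩ := hΓlip s t hs ht hst
          exact ⟨h₀, by linarith⟩
      monotoneOn_Γ := fun s hs t ht hst => sub_nonneg.1 (hΓlip s t hs ht hst).1
      le_min := fun t ht => (hΓrange t ht).2 }
  constructor
  · intro heq x hx y hy
    exact ⟨H.conditionAbove_of_splice_eq_AG hx hy (heq x hx y hy),
      H.conditionBelow_of_splice_eq_AG hx hy (heq x hx y hy)⟩
  · intro hcond x hx y hy
    rcases le_or_gt y (φ x) with hyx | hxy
    · exact H.splice_eq_AG_of_le hx hy hyx fun x hx y hy => (hcond x hx y hy).2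
    · exact H.splice_eq_AG_of_lt hx hy hxy fun x hx y hy => (hcond x hx y hy).1
end
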